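/- There exists a bipartite labelled acyclic directed graph B(X,Y) with all arcs directed from X to Y and all arcs carrying the same label, which is not complete bipartite, such that B(X,Y) is NOT isomorphic to (B(X,Y)/Y) \boxbackslash (B(X,Y)/X). Concretely, take X = {u_1, u_2}, Y = {v_1, v_2, v_3} and arcs u_1\to v_2, u_1\to v_3, u_2\to v_1, u_2\to v_2, u_2\to v_3, all with the same label: then (B(X,Y)/Y) \boxbackslash (B(X,Y)/X) has 6 arcs while B(X,Y) has 5, so they are not isomorphic. -/

import Mathlib

/-!
With a single label every arc of `(B/Y) ⊠ (B/X)` is synchronous. All arcs of `B/Y` enter the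
contracted vertex `*` and all arcs of `B/X` leave it, so the synchronous arc of `(α, β)` runs
from `(tail α, *)` to `(*, head β)`. These tails never acquire an in-arc, so nothing is
removed and the VRSP has `2 · 3 = 6` arcs; moreover its arc relation is a rectangle (every
tail is joined to every head). Isomorphisms preserve rectangularity, while `B` has the arcs
`u₁ → v₂` and `u₂ → v₁` but not `u₁ → v₁`.
-/

/-- A labelled directed multigraph: vertex type `V`, arc type `A`, label type `L`,
incidence function `mu` giving (tail, head), and arc labelling `lab`. -/
structure LDMG (V A L : Type) where
  mu : A → V × V
  lab : A → L

namespace LDMG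

variable {V A L V' A' : Type}

/-- The one-step arc relation. -/
def step (G : LDMG V A L) (u v : V) : Prop := ∃ a, G.mu a = (u, v)

/-- `G` is acyclic: no directed cycle. -/
def Acyclic (G : LDMG V A L) : Prop := ∀ v, ¬ Relation.TransGen G.step v v

/-- `v` has in-degree 0 in `G`. -/
def InDegZero (G : LDMG V A L) (v : V) : Prop := ∀ a, (G.mu a).2 ≠ v

/-- `v` has out-degree 0 in `G`. -/
def OutDegZero (G : LDMG V A L) (v : V) : Prop := ∀ a, (G.mu a).1 ≠ v

/-- `peel G n`: the set of vertices deleted after `n` rounds of repeatedly removing the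
vertices of in-degree 0 (together with the arcs with tails there). -/
def peel (G : LDMG V A L) : ℕ → Set V
  | 0 => ∅
  | n + 1 => peel G n ∪ {v | ∀ a, (G.mu a).2 = v → (G.mu a).1 ∈ peel G n}

/-- The level set `S^n(G)`. -/
def levelSet (G : LDMG V A L) (n : ℕ) : Set V := peel G (n + 1) \ peel G n

/-- Vertex type of the contraction `G/X`: the vertices outside `X` together with one new
vertex (`Sum.inr ()`) replacing `X`. -/
def CVertex (X : Set V) : Type := {v : V // v ∉ X} ⊕ Unit

/-- Canonical projection of vertices to contraction vertices. -/
noncomputable def cMap (X : Set V) (v : V) : CVertex X :=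
  haveI := Classical.propDecidable (v ∈ X)
  if h : v ∈ X then Sum.inr () else Sum.inl ⟨v, h⟩

/-- The arcs of `G` surviving the contraction of `X` (i.e. not having both ends in `X`),
before identification of parallel equally-labelled arcs. -/
def CPre (G : LDMG V A L) (X : Set V) : Type :=
  {a : A // ¬ ((G.mu a).1 ∈ X ∧ (G.mu a).2 ∈ X)}

noncomputable def cKey (G : LDMG V A L) (X : Set V) (a : CPre G X) :
    (CVertex X × CVertex X) × L :=
  ((cMap X (G.mu a.1).1, cMap X (G.mu a.1).2), G.lab a.1)

/-- Arc type of `G/X`: surviving arcs, with arcs having identical tail, head and label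
identified. -/
def CArc (G : LDMG V A L) (X : Set V) : Type :=
  Quotient (Setoid.ker (cKey G X))

/-- The contraction `G/X`. -/
noncomputable def contract (G : LDMG V A L) (X : Set V) : LDMG (CVertex X) (CArc G X) L where
  mu := Quotient.lift (fun a => (cKey G X a).1) (fun _ _ h => congrArg Prod.fst h)
  lab := Quotient.lift (fun a => (cKey G X a).2) (fun _ _ h => congrArg Prod.snd h)

/-- The Cartesian product `G □ H`. -/
def box (G : LDMG V A L) (H : LDMG V' A' L) : LDMG (V × V') (A × V' ⊕ V × A') L where
  mu := fun x =>
    match x with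
    | Sum.inl (a, w) => (((G.mu a).1, w), ((G.mu a).2, w))
    | Sum.inr (u, b) => ((u, (H.mu b).1), (u, (H.mu b).2))
  lab := fun x =>
    match x with
    | Sum.inl (a, _) => G.lab a
    | Sum.inr (_, b) => H.lab b

/-- The label `ℓ` occurs in `G`. -/
def HasLab (G : LDMG V A L) (ℓ : L) : Prop := ∃ a, G.lab a = ℓ

/-- Arc type of the intermediate product `G ⊠ H`: asynchronous copies of arcs of `G`
(whose label does not occur in `H`), asynchronous copies of arcs of `H` (whose label
does not occur in `G`), and synchronous arcs for pairs of equally labelled arcs. -/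
def InterArc (G : LDMG V A L) (H : LDMG V' A' L) : Type :=
  {p : A × V' // ¬ H.HasLab (G.lab p.1)} ⊕
  {p : V × A' // ¬ G.HasLab (H.lab p.2)} ⊕
  {p : A × A' // G.lab p.1 = H.lab p.2}

/-- The intermediate product `G ⊠ H`. -/
def inter (G : LDMG V A L) (H : LDMG V' A' L) : LDMG (V × V') (InterArc G H) L where
  mu := fun x =>
    match x with
    | Sum.inl ⟨(a, w), _⟩ => (((G.mu a).1, w), ((G.mu a).2, w))
    | Sum.inr (Sum.inl ⟨(u, b), _⟩) => ((u, (H.mu b).1), (u, (H.mu b).2))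
    | Sum.inr (Sum.inr ⟨(a, b), _⟩) => (((G.mu a).1, (H.mu b).1), ((G.mu a).2, (H.mu b).2))
  lab := fun x =>
    match x with
    | Sum.inl ⟨(a, _), _⟩ => G.lab a
    | Sum.inr (Sum.inl ⟨(_, b), _⟩) => H.lab b
    | Sum.inr (Sum.inr ⟨(a, _), _⟩) => G.lab a

/-- `v` has positive level in `G □ H`, i.e. some in-arc in the Cartesian product. -/
def PosLevelBox (G : LDMG V A L) (H : LDMG V' A' L) (v : V × V') : Prop :=
  ∃ x, ((G.box H).mu x).2 = v

/-- The set of vertices removed after `n` rounds of the VRSP removal process: repeatedly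
remove the vertices having in-degree 0 in the current graph but positive level in `G □ H`
(together with their out-arcs). -/
def vrspRem (G : LDMG V A L) (H : LDMG V' A' L) : ℕ → Set (V × V')
  | 0 => ∅
  | n + 1 => vrspRem G H n ∪
      {v | PosLevelBox G H v ∧
        ∀ x, ((G.inter H).mu x).2 = v → ((G.inter H).mu x).1 ∈ vrspRem G H n}

/-- All vertices eventually removed in the VRSP removal process. -/
def vrspRemoved (G : LDMG V A L) (H : LDMG V' A' L) : Set (V × V') := ⋃ n, vrspRem G H n

/-- Vertex type of the vertex-removing synchronised product `G ⊟ H`. -/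
def VrspV (G : LDMG V A L) (H : LDMG V' A' L) : Type := {v : V × V' // v ∉ vrspRemoved G H}

/-- Arc type of `G ⊟ H`: arcs of `G ⊠ H` with both ends surviving. -/
def VrspArc (G : LDMG V A L) (H : LDMG V' A' L) : Type :=
  {x : InterArc G H // ((G.inter H).mu x).1 ∉ vrspRemoved G H ∧
    ((G.inter H).mu x).2 ∉ vrspRemoved G H}

/-- The vertex-removing synchronised product `G ⊟ H`. -/
def vrsp (G : LDMG V A L) (H : LDMG V' A' L) : LDMG (VrspV G H) (VrspArc G H) L where
  mu := fun x => (⟨((G.inter H).mu x.1).1, x.2.1⟩, ⟨((G.inter H).mu x.1).2, x.2.2⟩)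
  lab := fun x => (G.inter H).lab x.1

/-- Isomorphism of labelled directed multigraphs: a vertex bijection preserving the
existence of arcs together with their labels. -/
def Iso (G : LDMG V A L) {V' A' : Type} (H : LDMG V' A' L) : Prop :=
  ∃ φ : V ≃ V', ∀ u v ℓ,
    (∃ a, G.mu a = (u, v) ∧ G.lab a = ℓ) ↔ (∃ b, H.mu b = (φ u, φ v) ∧ H.lab b = ℓ)

end LDMG

/-- The concrete incomplete bipartite counterexample: parts `X = {0, 1}` (for `u₁, u₂`)
and `Y = {2, 3, 4}` (for `v₁, v₂, v₃`), arcs `u₁→v₂, u₁→v₃, u₂→v₁, u₂→v₂, u₂→v₃`, all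
with the same label. -/
def Bex : LDMG (Fin 5) (Fin 5) Unit where
  mu := ![((0 : Fin 5), (3 : Fin 5)), (0, 4), (1, 2), (1, 3), (1, 4)]
  lab := fun _ => ()

def Xex : Set (Fin 5) := {0, 1}

def Yex : Set (Fin 5) := {2, 3, 4}

namespace LDMG

variable {V A L V' A' : Type}

theorem acyclic_of_forall_mem {G : LDMG V A L} {X Y : Set V} (hXY : Disjoint X Y)
    (hG : ∀ a, (G.mu a).1 ∈ X ∧ (G.mu a).2 ∈ Y) : G.Acyclic := by
  have tail_mem : ∀ {u v}, G.step u v → u ∈ X := by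
    rintro u v ⟨a, ha⟩
    simpa [ha] using (hG a).1
  have head_mem : ∀ {u v}, G.step u v → v ∈ Y := by
    rintro u v ⟨a, ha⟩
    simpa [ha] using (hG a).2
  intro v hv
  obtain ⟨_, hfirst, -⟩ := Relation.TransGen.head'_iff.1 hv
  obtain ⟨_, -, hlast⟩ := Relation.TransGen.tail'_iff.1 hv
  exact hXY.ne_of_mem (tail_mem hfirst) (head_mem hlast) rfl

section Contraction

variable {G : LDMG V A L} {X : Set V}

theorem cMap_of_mem {v : V} (h : v ∈ X) : cMap X v = Sum.inr () := dif_pos h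

theorem cMap_of_notMem {v : V} (h : v ∉ X) : cMap X v = Sum.inl ⟨v, h⟩ := dif_neg h

theorem cMap_inj_of_notMem {u v : V} (hu : u ∉ X) (hv : v ∉ X) :
    cMap X u = cMap X v ↔ u = v := by
  rw [cMap_of_notMem hu, cMap_of_notMem hv]
  exact ⟨fun h => congrArg Subtype.val (Sum.inl_injective h), fun h => by subst h; rfl⟩

theorem contract_mu_mk (a : CPre G X) :
    (G.contract X).mu ⟦a⟧ = (cMap X (G.mu a.1).1, cMap X (G.mu a.1).2) := rfl

theorem contract_mu_fst_eq (h : ∀ a, (G.mu a).1 ∈ X) (α : CArc G X) :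
    ((G.contract X).mu α).1 = Sum.inr () := by
  induction α using Quotient.ind with | _ a => exact cMap_of_mem (h a.1)

theorem contract_mu_snd_eq (h : ∀ a, (G.mu a).2 ∈ X) (α : CArc G X) :
    ((G.contract X).mu α).2 = Sum.inr () := by
  induction α using Quotient.ind with | _ a => exact cMap_of_mem (h a.1)

theorem contract_mu_fst_ne (h : ∀ a, (G.mu a).1 ∉ X) (α : CArc G X) :
    ((G.contract X).mu α).1 ≠ Sum.inr () := by
  induction α using Quotient.ind with
  | _ a => rw [contract_mu_mk, cMap_of_notMem (h a.1)]; exact Sum.inl_ne_inr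

theorem contract_mu_snd_ne (h : ∀ a, (G.mu a).2 ∉ X) (α : CArc G X) :
    ((G.contract X).mu α).2 ≠ Sum.inr () := by
  induction α using Quotient.ind with
  | _ a => rw [contract_mu_mk, cMap_of_notMem (h a.1)]; exact Sum.inl_ne_inr

theorem card_cArc_eq_card_range {β : Type} (f : A → β)
    (hX : ∀ a, ¬ ((G.mu a).1 ∈ X ∧ (G.mu a).2 ∈ X))
    (hf : ∀ a b : CPre G X, cKey G X a = cKey G X b ↔ f a.1 = f b.1) :
    Nat.card (CArc G X) = Nat.card (Set.range f) := by
  have hrange : Set.range (fun a : CPre G X => f a.1) = Set.range f :=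
    Function.Surjective.range_comp (fun a => ⟨⟨a, hX a⟩, rfl⟩) f
  exact Nat.card_congr <| (Quotient.congrRight hf).trans <|
    (Setoid.quotientKerEquivRange _).trans (Equiv.setCongr hrange)

theorem card_cArc_eq_card_tails [Subsingleton L]
    (hX : ∀ a, (G.mu a).1 ∉ X ∧ (G.mu a).2 ∈ X) :
    Nat.card (CArc G X) = Nat.card (Set.range fun a => (G.mu a).1) := by
  refine card_cArc_eq_card_range _ (fun a h => (hX a).1 h.1) fun a b => ?_
  simp only [cKey, cMap_of_mem (hX _).2, Subsingleton.elim (G.lab a.1) (G.lab b.1),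
    Prod.mk.injEq, and_true]
  exact Prod.ext_iff.trans ((and_iff_left rfl).trans (cMap_inj_of_notMem (hX _).1 (hX _).1))

theorem card_cArc_eq_card_heads [Subsingleton L]
    (hX : ∀ a, (G.mu a).1 ∈ X ∧ (G.mu a).2 ∉ X) :
    Nat.card (CArc G X) = Nat.card (Set.range fun a => (G.mu a).2) := by
  refine card_cArc_eq_card_range _ (fun a h => (hX a).2 h.2) fun a b => ?_
  simp only [cKey, cMap_of_mem (hX _).1, Subsingleton.elim (G.lab a.1) (G.lab b.1),
    Prod.mk.injEq, and_true]
  exact Prod.ext_iff.trans ((and_iff_right rfl).trans (cMap_inj_of_notMem (hX _).2 (hX _).2))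

end Contraction

section Survival

variable {G : LDMG V A L} {H : LDMG V' A' L}

theorem notMem_vrspRemoved_of_not_posLevelBox {v : V × V'} (hv : ¬ PosLevelBox G H v) :
    v ∉ vrspRemoved G H := by
  simp only [vrspRemoved, Set.mem_iUnion, not_exists]
  intro n
  induction n with
  | zero => exact id
  | succ n ih => rintro (h | h); exacts [ih h, hv h.1]

theorem not_posLevelBox_of_inDegZero {u : V} {w : V'} (hu : G.InDegZero u) (hw : H.InDegZero w) :
    ¬ PosLevelBox G H (u, w) := by
  rintro ⟨(⟨a, w'⟩ | ⟨u', b⟩), hx⟩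
  · exact hu a (congrArg Prod.fst hx)
  · exact hw b (congrArg Prod.snd hx)

theorem snd_notMem_vrspRemoved (x : InterArc G H)
    (hx : ((G.inter H).mu x).1 ∉ vrspRemoved G H) : ((G.inter H).mu x).2 ∉ vrspRemoved G H := by
  simp only [vrspRemoved, Set.mem_iUnion, not_exists] at hx ⊢
  intro n
  induction n with
  | zero => exact id
  | succ n ih => rintro (h | h); exacts [ih h, hx n (h.2 x rfl)]

end Survival

section SingleLabel

variable {G : LDMG V A L} {H : LDMG V' A' L} [Subsingleton L] [Nonempty A] [Nonempty A']

theorem hasLab_of_subsingleton {B : Type} [Nonempty B] (K : LDMG V B L) (ℓ : L) : K.HasLab ℓ :=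
  ⟨Classical.arbitrary B, Subsingleton.elim _ _⟩

/-- With a single label every arc of `G ⊠ H` is synchronous. -/
def interArcEquivProd : InterArc G H ≃ A × A' :=
  haveI : IsEmpty {p : A × V' // ¬ H.HasLab (G.lab p.1)} :=
    ⟨fun p => p.2 (hasLab_of_subsingleton H _)⟩
  haveI : IsEmpty {p : V × A' // ¬ G.HasLab (H.lab p.2)} :=
    ⟨fun p => p.2 (hasLab_of_subsingleton G _)⟩
  (Equiv.emptySum _ _).trans <| (Equiv.emptySum _ _).trans <|
    Equiv.subtypeUnivEquiv fun _ => Subsingleton.elim _ _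

theorem inter_mu_interArcEquivProd_symm (p : A × A') :
    (G.inter H).mu (interArcEquivProd.symm p) =
      (((G.mu p.1).1, (H.mu p.2).1), ((G.mu p.1).2, (H.mu p.2).2)) := rfl

theorem inter_mu_eq (x : InterArc G H) :
    (G.inter H).mu x = (((G.mu (interArcEquivProd x).1).1, (H.mu (interArcEquivProd x).2).1),
      ((G.mu (interArcEquivProd x).1).2, (H.mu (interArcEquivProd x).2).2)) := by
  conv_lhs => rw [← interArcEquivProd.symm_apply_apply x]
  rfl

/-- When every tail is a source, no tail of `G ⊠ H` ever gets a box in-arc, so no arc of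
`G ⊠ H` loses an endpoint. -/
theorem card_vrspArc (hG : ∀ a, G.InDegZero (G.mu a).1) (hH : ∀ b, H.InDegZero (H.mu b).1) :
    Nat.card (VrspArc G H) = Nat.card A * Nat.card A' := by
  have tail_survives (x : InterArc G H) : ((G.inter H).mu x).1 ∉ vrspRemoved G H := by
    rw [inter_mu_eq]
    exact notMem_vrspRemoved_of_not_posLevelBox (not_posLevelBox_of_inDegZero (hG _) (hH _))
  rw [← Nat.card_prod]
  exact Nat.card_congr <| (Equiv.subtypeUnivEquiv fun x =>
    ⟨tail_survives x, snd_notMem_vrspRemoved x (tail_survives x)⟩).trans interArcEquivProd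

end SingleLabel

def IsRectangular (G : LDMG V A L) : Prop :=
  ∀ ⦃u v u' v'⦄, G.step u v → G.step u' v' → G.step u v'

theorem IsRectangular.of_iso {G : LDMG V A L} {H : LDMG V' A' L} (e : G.Iso H)
    (hH : H.IsRectangular) : G.IsRectangular := by
  obtain ⟨φ, hφ⟩ := e
  have step_iff (u v : V) : G.step u v ↔ H.step (φ u) (φ v) := by
    constructor
    · rintro ⟨a, ha⟩
      obtain ⟨b, hb, -⟩ := (hφ u v (G.lab a)).1 ⟨a, ha, rfl⟩
      exact ⟨b, hb⟩
    · rintro ⟨b, hb⟩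
      obtain ⟨a, ha, -⟩ := (hφ u v (H.lab b)).2 ⟨b, hb, rfl⟩
      exact ⟨a, ha⟩
  intro u v u' v' h h'
  exact (step_iff u v').2 (hH ((step_iff u v).1 h) ((step_iff u' v').1 h'))

/-- The synchronous arc built from the `G`-component of one arc and the `H`-component of
another runs from the tail of the first to the head of the second. -/
theorem isRectangular_vrsp {G : LDMG V A L} {H : LDMG V' A' L} [Subsingleton L] [Nonempty A]
    [Nonempty A'] {c : V} {d : V'} (hG : ∀ a, (G.mu a).2 = c) (hH : ∀ b, (H.mu b).1 = d) :
    (G.vrsp H).IsRectangular := by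
  rintro u v u' v' ⟨x, hx⟩ ⟨y, hy⟩
  set z : InterArc G H := interArcEquivProd.symm
    ((interArcEquivProd x.1).1, (interArcEquivProd y.1).2)
  have hz : (G.inter H).mu z = (((G.inter H).mu x.1).1, ((G.inter H).mu y.1).2) := by
    rw [inter_mu_interArcEquivProd_symm, inter_mu_eq x.1, inter_mu_eq y.1, hH, hH, hG, hG]
  refine ⟨⟨z, hz ▸ x.2.1, hz ▸ y.2.2⟩, ?_⟩
  simp only [vrsp, Prod.ext_iff] at hx hy ⊢
  exact ⟨Subtype.ext ((congrArg Prod.fst hz).trans (congrArg Subtype.val hx.1)),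
    Subtype.ext ((congrArg Prod.snd hz).trans (congrArg Subtype.val hy.2))⟩

end LDMG

open LDMG

theorem bex_bipartite : ∀ a : Fin 5, (Bex.mu a).1 ∈ Xex ∧ (Bex.mu a).2 ∈ Yex := by
  unfold Xex Yex
  decide

theorem disjoint_xex_yex : Disjoint Xex Yex := by
  rw [Set.disjoint_left]
  unfold Xex Yex
  decide

theorem bex_not_isRectangular : ¬ Bex.IsRectangular := fun h =>
  absurd (h (v := 3) (u' := 1) ⟨0, rfl⟩ ⟨2, rfl⟩) (by unfold LDMG.step; decide)

theorem bex_card_tails : Nat.card (Set.range fun a => (Bex.mu a).1) = 2 := by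
  rw [Nat.card_eq_card_toFinset, Set.toFinset_range]
  decide

theorem bex_card_heads : Nat.card (Set.range fun a => (Bex.mu a).2) = 3 := by
  rw [Nat.card_eq_card_toFinset, Set.toFinset_range]
  decide

/-- There is a bipartite labelled acyclic directed graph `B(X,Y)`, all of whose arcs go
from `X` to `Y` and carry the same label, which is not complete bipartite and is not
isomorphic to `(B(X,Y)/Y) ⊟ (B(X,Y)/X)`: the above example has 5 arcs while the VRSP has
6 arcs. -/
theorem counterexample_not_iso :
    (∀ a : Fin 5, (Bex.mu a).1 ∈ Xex ∧ (Bex.mu a).2 ∈ Yex) ∧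
    Bex.Acyclic ∧
    (¬ ∀ x ∈ Xex, ∀ y ∈ Yex, ∃ a : Fin 5, Bex.mu a = (x, y)) ∧
    Nat.card (Fin 5) = 5 ∧
    Nat.card (LDMG.VrspArc (Bex.contract Yex) (Bex.contract Xex)) = 6 ∧
    ¬ LDMG.Iso Bex ((Bex.contract Yex).vrsp (Bex.contract Xex)) := by
  have hY (a : Fin 5) : (Bex.mu a).1 ∉ Yex ∧ (Bex.mu a).2 ∈ Yex :=
    ⟨disjoint_xex_yex.notMem_of_mem_left (bex_bipartite a).1, (bex_bipartite a).2⟩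
  have hX (a : Fin 5) : (Bex.mu a).1 ∈ Xex ∧ (Bex.mu a).2 ∉ Xex :=
    ⟨(bex_bipartite a).1, disjoint_xex_yex.notMem_of_mem_right (bex_bipartite a).2⟩
  have : Nonempty (CArc Bex Yex) := ⟨⟦⟨0, fun h => (hY 0).1 h.1⟩⟧⟩
  have : Nonempty (CArc Bex Xex) := ⟨⟦⟨0, fun h => (hX 0).2 h.2⟩⟧⟩
  have heads_Y := contract_mu_snd_eq fun a => (hY a).2
  have tails_X := contract_mu_fst_eq fun a => (hX a).1
  have sources_Y (α : CArc Bex Yex) : (Bex.contract Yex).InDegZero ((Bex.contract Yex).mu α).1 :=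
    fun β h => contract_mu_fst_ne (fun a => (hY a).1) α (h.symm.trans (heads_Y β))
  have sources_X (β : CArc Bex Xex) : (Bex.contract Xex).InDegZero ((Bex.contract Xex).mu β).1 :=
    fun α h => contract_mu_snd_ne (fun a => (hX a).2) α (h.trans (tails_X β))
  refine ⟨bex_bipartite, acyclic_of_forall_mem disjoint_xex_yex bex_bipartite, ?_, Nat.card_fin 5,
    ?_, fun e => bex_not_isRectangular (.of_iso e (isRectangular_vrsp heads_Y tails_X))⟩
  · unfold Xex Yex
    decide
  · rw [card_vrspArc sources_Y sources_X, card_cArc_eq_card_tails hY, card_cArc_eq_card_heads hX,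
      bex_card_tails, bex_card_heads]
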